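/- The uniform mixture over the order-8 subgroup G_456 of local symmetry operations (generated by the operations τ_4 : (x,y)↦(x⊕1,y⊕1), τ_5 : (x,t)↦(x⊕s, t⊕1), τ_6 : (y,s)↦(y⊕t, s⊕1)) projects every CHSH-type box with CHSH(R) ≥ 2 onto the chain {C(α)} = {αR_PR + (1−α)L_NPR : α ∈ [0,1]}, and preserves the CHSH value: CHSH(τ_erase(R)) = CHSH(R), where τ_erase := (1/|G_456|) Σ_{g ∈ G_456} g. -/

import Mathlib

open Finset

noncomputable section

/-- The index set of a CHSH-type box: `(x, y, s, t)`. -/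
abbrev Idx : Type := Fin 2 × Fin 2 × Fin 2 × Fin 2

def sgn : Fin 2 → ℝ := fun a => if a = 0 then 1 else -1

def corr (R : Idx → ℝ) (s t : Fin 2) : ℝ := ∑ x, ∑ y, sgn x * sgn y * R (x, y, s, t)

def CHSH (R : Idx → ℝ) : ℝ := corr R 0 0 + corr R 1 0 + corr R 0 1 - corr R 1 1

def IsBox (R : Idx → ℝ) : Prop :=
  (∀ p, 0 ≤ R p) ∧ (∀ s t, ∑ x, ∑ y, R (x, y, s, t) = 1) ∧
  (∀ x s t t', ∑ y, R (x, y, s, t) = ∑ y, R (x, y, s, t')) ∧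
  (∀ y t s s', ∑ x, R (x, y, s, t) = ∑ x, R (x, y, s', t))

def PRbox : Idx → ℝ := fun p => if p.1 + p.2.1 = p.2.2.1 * p.2.2.2 then 1/2 else 0

/-- `L_NPR = (1/2)R_PR + (1/2)L_∅`, with `L_∅` the maximally mixed box. -/
def LNPR : Idx → ℝ := fun p => (1/2) * PRbox p + (1/2) * (1/4)

/-- The noisy PR chain `C(α) = α·R_PR + (1−α)·L_NPR`. -/
def C (α : ℝ) : Idx → ℝ := fun p => α * PRbox p + (1 - α) * LNPR p

/-- `τ₄ : (x,y) ↦ (x⊕1, y⊕1)`. -/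
def f4 : Idx → Idx := fun p => (p.1 + 1, p.2.1 + 1, p.2.2.1, p.2.2.2)

/-- `τ₅ : (x,t) ↦ (x⊕s, t⊕1)`. -/
def f5 : Idx → Idx := fun p => (p.1 + p.2.2.1, p.2.1, p.2.2.1, p.2.2.2 + 1)

/-- `τ₆ : (y,s) ↦ (y⊕t, s⊕1)`. -/
def f6 : Idx → Idx := fun p => (p.1, p.2.1 + p.2.2.2, p.2.2.1 + 1, p.2.2.2)

theorem f4_inv : Function.Involutive f4 := by intro p; revert p; decide
theorem f5_inv : Function.Involutive f5 := by intro p; revert p; decide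
theorem f6_inv : Function.Involutive f6 := by intro p; revert p; decide

def g4 : Equiv.Perm Idx := f4_inv.toPerm
def g5 : Equiv.Perm Idx := f5_inv.toPerm
def g6 : Equiv.Perm Idx := f6_inv.toPerm

/-- The subgroup of local symmetry operations generated by `τ₄, τ₅, τ₆`. -/
def G456 : Subgroup (Equiv.Perm Idx) := Subgroup.closure {g4, g5, g6}

/-- The uniform mixture over `G456`: `τ_erase = (1/|G456|) Σ_{g ∈ G456} g`. -/
def erase456 (R : Idx → ℝ) : Idx → ℝ :=
  letI : Fintype ↥G456 := Fintype.ofFinite _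
  fun p => (Nat.card ↥G456 : ℝ)⁻¹ * ∑ g : ↥G456, R ((g : Equiv.Perm Idx) p)

/-! `G456` is the dihedral group of order 8 generated by the rotation `τ₅τ₆` (whose square is
`τ₄`) and the reflection `τ₅`. It acts simply transitively on each of the two 8-element level sets
of `R_PR`: its support `x ⊕ y = s t` and the complement. Averaging over `G456` therefore replaces a
box by its mean on each of these sets. Both sets are invariant, so averaging also preserves the two
sums, and `CHSH R` is their difference. For a box the two sums add up to 4, which pins down the
averaged box as the chain member `C (Σ_{x ⊕ y = s t} R - 3)`, and `2 ≤ CHSH R ≤ 4` puts the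
parameter in `[0, 1]`. -/

section GroupAverage

variable {X : Type*} [Finite X]

def groupAverage (H : Subgroup (Equiv.Perm X)) (R : X → ℝ) : X → ℝ :=
  letI : Fintype ↥H := Fintype.ofFinite _
  fun p => (Nat.card ↥H : ℝ)⁻¹ * ∑ g : ↥H, R ((g : Equiv.Perm X) p)

variable {H : Subgroup (Equiv.Perm X)} (R : X → ℝ)

theorem groupAverage_apply_of_mem {h : Equiv.Perm X} (hh : h ∈ H) (p : X) :
    groupAverage H R (h p) = groupAverage H R p := by
  let : Fintype ↥H := Fintype.ofFinite _
  simp only [groupAverage]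
  congr 1
  exact Fintype.sum_equiv (Equiv.mulRight ⟨h, hh⟩) _ _ fun _ => rfl

theorem sum_groupAverage_of_invariant (S : Finset X) (hS : ∀ g ∈ H, ∀ p, g p ∈ S ↔ p ∈ S) :
    ∑ p ∈ S, groupAverage H R p = ∑ p ∈ S, R p := by
  let : Fintype ↥H := Fintype.ofFinite _
  have hperm (g : ↥H) : ∑ p ∈ S, R ((g : Equiv.Perm X) p) = ∑ p ∈ S, R p :=
    sum_equiv (g : Equiv.Perm X) (fun p => (hS g g.2 p).symm) fun _ _ => rfl
  have hcard : (Nat.card ↥H : ℝ) ≠ 0 := Nat.cast_ne_zero.mpr Nat.card_pos.ne'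
  simp only [groupAverage]
  rw [← mul_sum, sum_comm]
  simp only [hperm, sum_const, card_univ, ← Nat.card_eq_fintype_card, nsmul_eq_mul]
  field_simp

theorem groupAverage_eq_of_subset_orbit (S : Finset X) (hS : ∀ g ∈ H, ∀ p, g p ∈ S ↔ p ∈ S)
    {p₀ : X} (horbit : ∀ q ∈ S, ∃ g ∈ H, g p₀ = q) {p : X} (hp : p ∈ S) :
    groupAverage H R p = (∑ q ∈ S, R q) / S.card := by
  have hconst : ∀ q ∈ S, groupAverage H R q = groupAverage H R p₀ := fun q hq => by
    obtain ⟨g, hg, rfl⟩ := horbit q hq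
    exact groupAverage_apply_of_mem R hg p₀
  have hS0 : (S.card : ℝ) ≠ 0 := Nat.cast_ne_zero.mpr (card_ne_zero_of_mem hp)
  rw [← sum_groupAverage_of_invariant R S hS, sum_congr rfl hconst, hconst p hp,
    sum_const, nsmul_eq_mul]
  field_simp

end GroupAverage

def r56 : Equiv.Perm Idx := g5 * g6

def elems456 : Finset (Equiv.Perm Idx) :=
  (range 4).image (r56 ^ ·) ∪ (range 4).image (g5 * r56 ^ ·)

theorem mem_G456_of_mem_elems456 {g : Equiv.Perm Idx} (hg : g ∈ elems456) : g ∈ G456 := by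
  have h5 : g5 ∈ G456 := Subgroup.subset_closure (by simp)
  have h6 : g6 ∈ G456 := Subgroup.subset_closure (by simp)
  simp only [elems456, mem_union, mem_image] at hg
  rcases hg with ⟨k, -, rfl⟩ | ⟨k, -, rfl⟩
  · exact pow_mem (mul_mem h5 h6) k
  · exact mul_mem h5 (pow_mem (mul_mem h5 h6) k)

theorem mem_elems456_of_mem_G456 {g : Equiv.Perm Idx} (hg : g ∈ G456) : g ∈ elems456 := by
  have hclosed : ∀ s ∈ ({g4, g5, g6} : Finset (Equiv.Perm Idx)), ∀ x ∈ elems456,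
      s * x ∈ elems456 ∧ s⁻¹ * x ∈ elems456 := by
    decide
  induction hg using Subgroup.closure_induction_left with
  | one => decide
  | mul_left s hs x _ hx => exact (hclosed s (by simpa using hs) x hx).1
  | inv_mul_cancel s hs x _ hx => exact (hclosed s (by simpa using hs) x hx).2

theorem card_G456 : Nat.card ↥G456 = 8 := by
  have : (G456 : Set (Equiv.Perm Idx)) = elems456 :=
    Set.ext fun _ => ⟨mem_elems456_of_mem_G456, mem_G456_of_mem_elems456⟩
  rw [← SetLike.coe_sort_coe, this, Nat.card_coe_set_eq, Set.ncard_coe_finset]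
  decide

def prSupport : Finset Idx := univ.filter fun p => p.1 + p.2.1 = p.2.2.1 * p.2.2.2

theorem card_prSupport : prSupport.card = 8 := by decide

theorem card_prSupport_compl : prSupportᶜ.card = 8 := by decide

theorem apply_mem_prSupport_iff {g : Equiv.Perm Idx} (hg : g ∈ G456) (p : Idx) :
    g p ∈ prSupport ↔ p ∈ prSupport := by
  have h : ∀ g ∈ elems456, ∀ p, g p ∈ prSupport ↔ p ∈ prSupport := by decide
  exact h g (mem_elems456_of_mem_G456 hg) p

theorem apply_mem_prSupport_compl_iff {g : Equiv.Perm Idx} (hg : g ∈ G456) (p : Idx) :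
    g p ∈ prSupportᶜ ↔ p ∈ prSupportᶜ := by
  simp only [mem_compl, apply_mem_prSupport_iff hg]

theorem prSupport_subset_orbit : ∀ q ∈ prSupport, ∃ g ∈ G456, g (0, 0, 0, 0) = q := by
  have h : ∀ q ∈ prSupport, ∃ g ∈ elems456, g (0, 0, 0, 0) = q := by decide
  intro q hq
  obtain ⟨g, hg, rfl⟩ := h q hq
  exact ⟨g, mem_G456_of_mem_elems456 hg, rfl⟩

theorem prSupport_compl_subset_orbit : ∀ q ∈ prSupportᶜ, ∃ g ∈ G456, g (1, 0, 0, 0) = q := by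
  have h : ∀ q ∈ prSupportᶜ, ∃ g ∈ elems456, g (1, 0, 0, 0) = q := by decide
  intro q hq
  obtain ⟨g, hg, rfl⟩ := h q hq
  exact ⟨g, mem_G456_of_mem_elems456 hg, rfl⟩

theorem erase456_eq_groupAverage (R : Idx → ℝ) : erase456 R = groupAverage G456 R := rfl

theorem erase456_eq_ite (R : Idx → ℝ) :
    erase456 R = fun p =>
      if p ∈ prSupport then (∑ q ∈ prSupport, R q) / 8 else (∑ q ∈ prSupportᶜ, R q) / 8 := by
  funext p
  rw [erase456_eq_groupAverage]
  split_ifs with hp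
  · rw [groupAverage_eq_of_subset_orbit R _ (fun _ hg => apply_mem_prSupport_iff hg)
      prSupport_subset_orbit hp, card_prSupport]
    norm_num
  · rw [groupAverage_eq_of_subset_orbit R _ (fun _ hg => apply_mem_prSupport_compl_iff hg)
      prSupport_compl_subset_orbit (mem_compl.mpr hp), card_prSupport_compl]
    norm_num

theorem C_eq_ite (α : ℝ) : C α = fun p => if p ∈ prSupport then (3 + α) / 8 else (1 - α) / 8 := by
  funext p
  simp only [C, LNPR, PRbox, prSupport, mem_filter, mem_univ, true_and]
  split_ifs <;> ring

theorem CHSH_eq_sum_sub_sum (R : Idx → ℝ) :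
    CHSH R = ∑ p ∈ prSupport, R p - ∑ p ∈ prSupportᶜ, R p := by
  simp only [CHSH, corr, sgn, Fin.isValue, mul_ite, mul_one, mul_neg, ite_mul, one_mul, neg_mul,
    Fin.sum_univ_two, ↓reduceIte, one_ne_zero, neg_neg, prSupport, sum_filter, Fintype.sum_prod_type,
    mul_zero, add_zero, add_eq_right, zero_ne_one, zero_add, Fin.reduceAdd, compl_filter, ite_not]
  ring

theorem CHSH_erase456 (R : Idx → ℝ) : CHSH (erase456 R) = CHSH R := by
  simp only [CHSH_eq_sum_sub_sum, erase456_eq_groupAverage,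
    sum_groupAverage_of_invariant R _ (fun _ hg => apply_mem_prSupport_iff hg),
    sum_groupAverage_of_invariant R _ (fun _ hg => apply_mem_prSupport_compl_iff hg)]

theorem IsBox.sum_eq_four {R : Idx → ℝ} (hR : IsBox R) : ∑ p, R p = 4 := by
  have h := hR.2.1
  simp only [Fintype.sum_prod_type, Fin.sum_univ_two] at h ⊢
  linarith [h 0 0, h 0 1, h 1 0, h 1 1]

/-- `G456` has order 8, and its uniform mixture preserves the CHSH value and projects
every CHSH-type box with `CHSH(R) ≥ 2` onto the noisy-PR chain `{C(α) : α ∈ [0,1]}`. -/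
theorem stmt_19 :
    Nat.card ↥G456 = 8 ∧
    ∀ R : Idx → ℝ, IsBox R → 2 ≤ CHSH R →
      CHSH (erase456 R) = CHSH R ∧ ∃ α ∈ Set.Icc (0:ℝ) 1, erase456 R = C α := by
  refine ⟨card_G456, fun R hR hCHSH => ⟨CHSH_erase456 R, ?_⟩⟩
  have hmass := hR.sum_eq_four
  rw [← sum_add_sum_compl prSupport] at hmass
  have hcompl : 0 ≤ ∑ p ∈ prSupportᶜ, R p := sum_nonneg fun p _ => hR.1 p
  rw [CHSH_eq_sum_sub_sum] at hCHSH
  refine ⟨∑ p ∈ prSupport, R p - 3, ⟨by linarith, by linarith⟩, ?_⟩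
  rw [erase456_eq_ite, C_eq_ite]
  funext p
  split_ifs
  · ring
  · linarith

end
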